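/- arXiv:1807.08933 — 2 statements merged into one kernel-verified Lean document; each statement's English description precedes it below -/
import Mathlib

section
/- If G is a 4-connected plane triangulation, then for every vertex v of G, the set of neighbours N(v) induces a cycle in G. -/
/-- A combinatorial plane triangulation: a simple graph together with its set of
triangular faces, each edge on exactly two faces, satisfying Euler's formula. -/
structure PlaneTriangulation (V : Type*) [Fintype V] [DecidableEq V] where
  G : SimpleGraph V
  faces : Finset (Finset V)
  face_card : ∀ f ∈ faces, f.card = 3
  face_clique : ∀ f ∈ faces, ∀ a ∈ f, ∀ b ∈ f, a ≠ b → G.Adj a b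
  edge_two_faces : ∀ a b : V, G.Adj a b → (faces.filter (fun f => a ∈ f ∧ b ∈ f)).card = 2
  euler : (Fintype.card V : ℤ) - (G.edgeSet.ncard : ℤ) + (faces.card : ℤ) = 2

/-- The degree of a vertex. -/
noncomputable def PlaneTriangulation.deg {V : Type*} [Fintype V] [DecidableEq V]
    (T : PlaneTriangulation V) (v : V) : ℕ := (T.G.neighborSet v).ncard

/-- Membership in the family `E(4)`, witnessed by a proper `3`-colouring
`{B, W, R}` in which every red vertex has degree `4`. -/
def PlaneTriangulation.IsE4Coloring {V : Type*} [Fintype V] [DecidableEq V]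
    (T : PlaneTriangulation V) (B W R : Set V) : Prop :=
  B ∪ W ∪ R = Set.univ ∧ Disjoint B W ∧ Disjoint B R ∧ Disjoint W R ∧
  (∀ a ∈ B, ∀ b ∈ B, ¬ T.G.Adj a b) ∧
  (∀ a ∈ W, ∀ b ∈ W, ¬ T.G.Adj a b) ∧
  (∀ a ∈ R, ∀ b ∈ R, ¬ T.G.Adj a b) ∧
  (∀ v ∈ R, T.deg v = 4)

def FourConnected {V : Type*} [Fintype V] (G : SimpleGraph V) : Prop :=
  5 ≤ Fintype.card V ∧ ∀ S : Set V, S.ncard ≤ 3 → (G.induce Sᶜ).Connected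

/-- A graph is a cycle graph: connected and 2-regular (on a nonempty vertex set). -/
def IsCycleGraph {α : Type*} (H : SimpleGraph α) : Prop :=
  Nonempty α ∧ H.Connected ∧ ∀ u : α, (H.neighborSet u).ncard = 2

/-!
The faces form a closed triangulated pseudomanifold; use its chain complex over `ZMod 2`.
For a dual-connected pseudomanifold, rank–nullity gives `V + F ≤ E + 2`, with equality only if
every `1`-cycle bounds. Summed over the classes of faces connected through edges, Euler's
formula leaves so few vertices shared between classes that they would separate the graph, so by
4-connectivity there is a single class and every `1`-cycle of the triangulation bounds.
Consequently the faces at a vertex `v` are connected through edges at `v` (a cycle leaving `v`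
into one rotation class and returning from another cannot bound), and every triangle is a face
(a `2`-chain bounded by a non-facial triangle is constant away from it, so has no boundary).
Hence the link of `v` is connected, and the common neighbours of `v` and a neighbour `u` are
exactly the third vertices of the two faces on `vu`.
-/

open Finset

lemma Finset.sum_card_filter_eq_card {β γ : Type*} {s : Finset β} {C : Finset γ}
    (r : β → γ → Prop) [∀ a c, Decidable (r a c)] (h : ∀ a ∈ s, #{c ∈ C | r a c} = 1) :
    ∑ c ∈ C, #{a ∈ s | r a c} = #s := by
  have := sum_card_bipartiteAbove_eq_sum_card_bipartiteBelow r (s := s) (t := C)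
  simp only [bipartiteAbove, bipartiteBelow] at this
  rw [← this, sum_congr rfl h, sum_const, smul_eq_mul, mul_one]

lemma Finset.two_mul_card_add_sum_le {ι : Type*} [Fintype ι] (r : ι → ℕ) (hr : ∀ i, 1 ≤ r i) :
    2 * Fintype.card ι + ∑ i with 2 ≤ r i, r i ≤ 2 * ∑ i, r i := by
  rw [sum_filter, ← card_univ, card_eq_sum_ones, mul_sum, mul_sum, ← sum_add_distrib]
  exact sum_le_sum fun i _ => by have := hr i; split_ifs <;> omega

lemma SimpleGraph.Preconnected.induce_propagate {V : Type*} {G : SimpleGraph V} {S : Set V}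
    (hG : (G.induce Sᶜ).Preconnected) {P : V → Prop}
    (hP : ∀ p q, p ∉ S → q ∉ S → G.Adj p q → P p → P q) {x y : V} (hx : x ∉ S) (hy : y ∉ S)
    (hPx : P x) : P y := by
  suffices ∀ q : ↥Sᶜ, Relation.ReflTransGen (G.induce Sᶜ).Adj ⟨x, hx⟩ q → P q from
    this _ ((SimpleGraph.reachable_iff_reflTransGen _ _).1 (hG ⟨x, hx⟩ ⟨y, hy⟩))
  intro q hq
  induction hq with
  | refl => exact hPx
  | @tail p q _ hpq ih => exact hP p q p.2 q.2 hpq ih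

lemma FourConnected.preconnected_induce_compl {V : Type*} [Fintype V] {G : SimpleGraph V}
    (h4 : FourConnected G) (S : Finset V) (hS : #S ≤ 3) : (G.induce (S : Set V)ᶜ).Preconnected :=
  (h4.2 S (by rwa [Set.ncard_coe_finset])).preconnected

namespace Faces

variable {α : Type*} [DecidableEq α]

def edges (F : Finset (Finset α)) : Finset (Sym2 α) :=
  F.biUnion fun f => {e ∈ f.sym2 | ¬ e.IsDiag}

def verts (F : Finset (Finset α)) : Finset α :=
  F.biUnion id

variable {F : Finset (Finset α)}

lemma mem_edges {e : Sym2 α} : e ∈ edges F ↔ ¬ e.IsDiag ∧ ∃ f ∈ F, e ∈ f.sym2 := by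
  simp only [edges, mem_biUnion, mem_filter]
  tauto

lemma mem_verts {a : α} : a ∈ verts F ↔ ∃ f ∈ F, a ∈ f := by
  simp [verts]

lemma mk_mem_edges {f : Finset α} (hf : f ∈ F) {a b : α} (ha : a ∈ f) (hb : b ∈ f)
    (hab : a ≠ b) : s(a, b) ∈ edges F :=
  mem_edges.2 ⟨by simpa using hab, f, hf, mk_mem_sym2_iff.2 ⟨ha, hb⟩⟩

/-- Unlike the usual notion of a pseudomanifold, no connectivity is assumed. -/
structure IsPseudomanifold (F : Finset (Finset α)) : Prop where
  card_eq_three : ∀ f ∈ F, #f = 3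
  card_faces_of_edge : ∀ e ∈ edges F, #{f ∈ F | e ∈ f.sym2} = 2

def AdjAlong (F : Finset (Finset α)) (P : Sym2 α → Prop) (f g : Finset α) : Prop :=
  f ∈ F ∧ g ∈ F ∧ ∃ e ∈ edges F, P e ∧ e ∈ f.sym2 ∧ e ∈ g.sym2

/-- For `P = (v ∈ ·)`, this is reachability by rotation about the vertex `v`. -/
def FaceReach (F : Finset (Finset α)) (P : Sym2 α → Prop) : Finset α → Finset α → Prop :=
  Relation.ReflTransGen (AdjAlong F P)

def IsDualConnected (F : Finset (Finset α)) : Prop :=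
  ∀ f ∈ F, ∀ g ∈ F, FaceReach F (fun _ => True) f g

lemma AdjAlong.symm {P : Sym2 α → Prop} {f g : Finset α} (h : AdjAlong F P f g) :
    AdjAlong F P g f := by
  obtain ⟨hf, hg, e, he, hP, hef, heg⟩ := h
  exact ⟨hg, hf, e, he, hP, heg, hef⟩

instance {P : Sym2 α → Prop} : Std.Symm (AdjAlong F P) := ⟨fun _ _ => AdjAlong.symm⟩

lemma FaceReach.symm {P : Sym2 α → Prop} {f g : Finset α} (h : FaceReach F P f g) :
    FaceReach F P g f :=
  Std.Symm.symm (r := Relation.ReflTransGen (AdjAlong F P)) _ _ h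

lemma IsPseudomanifold.eq_or_eq_of_mem_sym2 (hF : IsPseudomanifold F) {e : Sym2 α}
    (he : e ∈ edges F) {f g h : Finset α} (hf : f ∈ F) (hg : g ∈ F) (hh : h ∈ F)
    (hfg : f ≠ g) (hef : e ∈ f.sym2) (heg : e ∈ g.sym2) (heh : e ∈ h.sym2) :
    h = f ∨ h = g := by
  have hsub : {f, g} ⊆ {k ∈ F | e ∈ k.sym2} := by
    simp [insert_subset_iff, hf, hg, hef, heg]
  have heq := eq_of_subset_of_card_le hsub (by rw [hF.card_faces_of_edge e he, card_pair hfg])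
  have : h ∈ ({f, g} : Finset (Finset α)) := heq ▸ mem_filter.2 ⟨hh, heh⟩
  simpa using this

lemma IsPseudomanifold.exists_ne_mem_sym2 (hF : IsPseudomanifold F) {e : Sym2 α}
    (he : e ∈ edges F) (f : Finset α) : ∃ g ∈ F, g ≠ f ∧ e ∈ g.sym2 := by
  obtain ⟨g, hg, hgf⟩ := exists_mem_ne (by rw [hF.card_faces_of_edge e he]; norm_num) f
  exact ⟨g, (mem_filter.1 hg).1, hgf, (mem_filter.1 hg).2⟩

lemma filter_edges_eq_image {f : Finset α} (hf : f ∈ F) {a : α} (ha : a ∈ f) :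
    {e ∈ edges F | a ∈ e ∧ e ∈ f.sym2} = (f.erase a).image (s(a, ·)) := by
  ext e
  simp only [mem_filter, mem_image, mem_erase]
  constructor
  · rintro ⟨he, hae, hef⟩
    obtain ⟨b, rfl⟩ := Sym2.mem_iff_exists.1 hae
    refine ⟨b, ⟨fun hba => ?_, (mk_mem_sym2_iff.1 hef).2⟩, rfl⟩
    exact (mem_edges.1 he).1 (by simp [hba])
  · rintro ⟨b, ⟨hba, hb⟩, rfl⟩
    exact ⟨mk_mem_edges hf ha hb (Ne.symm hba), Sym2.mem_mk_left a b, mk_mem_sym2_iff.2 ⟨ha, hb⟩⟩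

lemma IsPseudomanifold.card_filter_edges (hF : IsPseudomanifold F) {f : Finset α} (hf : f ∈ F)
    (a : α) : #{e ∈ edges F | a ∈ e ∧ e ∈ f.sym2} = if a ∈ f then 2 else 0 := by
  split_ifs with ha
  · rw [filter_edges_eq_image hf ha, card_image_of_injective _ fun _ _ => Sym2.congr_right.1,
      card_erase_of_mem ha, hF.card_eq_three f hf]
  · rw [card_eq_zero, filter_eq_empty_iff]
    exact fun e _ ⟨hae, hef⟩ => ha (mem_sym2_iff.1 hef a hae)

/-! ### Chains over `ZMod 2` -/

def bd₂ (F : Finset (Finset α)) : (F → ZMod 2) →ₗ[ZMod 2] (edges F → ZMod 2) :=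
  Matrix.mulVecLin <| .of fun (e : edges F) (f : F) =>
    if (e : Sym2 α) ∈ (f : Finset α).sym2 then 1 else 0

def bd₁ (F : Finset (Finset α)) : (edges F → ZMod 2) →ₗ[ZMod 2] (α → ZMod 2) :=
  Matrix.mulVecLin <| .of fun (a : α) (e : edges F) => if a ∈ (e : Sym2 α) then 1 else 0

lemma bd₂_apply (z : F → ZMod 2) (e : edges F) :
    bd₂ F z e = ∑ f : F, if (e : Sym2 α) ∈ (f : Finset α).sym2 then z f else 0 := by
  simp [bd₂, Matrix.mulVec, dotProduct, ite_mul]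

lemma bd₁_single {a b : α} (hab : a ≠ b) (he : s(a, b) ∈ edges F) :
    bd₁ F (Pi.single ⟨s(a, b), he⟩ 1) = Pi.single a 1 + Pi.single b 1 := by
  ext x
  by_cases hxa : x = a
  · subst hxa; simp [bd₁, hab]
  · by_cases hxb : x = b
    · subst hxb; simp [bd₁, hxa]
    · simp [bd₁, hxa, hxb]

lemma IsPseudomanifold.bd₁_comp_bd₂ (hF : IsPseudomanifold F) : bd₁ F ∘ₗ bd₂ F = 0 := by
  rw [bd₁, bd₂, ← Matrix.mulVecLin_mul]
  refine (congrArg Matrix.mulVecLin ?_).trans Matrix.mulVecLin_zero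
  ext a f
  simp only [Matrix.mul_apply, Matrix.of_apply, Matrix.zero_apply, ite_mul, one_mul, zero_mul,
    ← ite_and]
  rw [sum_coe_sort (edges F) fun e => if a ∈ e ∧ e ∈ (f : Finset α).sym2 then (1 : ZMod 2) else 0,
    sum_boole, hF.card_filter_edges f.2]
  split_ifs <;> decide

lemma IsPseudomanifold.bd₂_apply_of_ne (hF : IsPseudomanifold F) (z : F → ZMod 2) {e : Sym2 α}
    (he : e ∈ edges F) {f g : Finset α} (hf : f ∈ F) (hg : g ∈ F) (hfg : f ≠ g)
    (hef : e ∈ f.sym2) (heg : e ∈ g.sym2) : bd₂ F z ⟨e, he⟩ = z ⟨f, hf⟩ + z ⟨g, hg⟩ := by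
  rw [bd₂_apply, sum_eq_add (⟨f, hf⟩ : F) ⟨g, hg⟩ (by simpa using hfg)]
  · simp [hef, heg]
  · rintro ⟨h, hh⟩ - hne
    rw [if_neg]
    intro heh
    rcases hF.eq_or_eq_of_mem_sym2 he hf hg hh hfg hef heg heh with rfl | rfl <;> simp_all
  · simp
  · simp

/-- Each face of `A` is counted twice, once for each of its edges at `v`; no other face is
counted. -/
lemma IsPseudomanifold.dotProduct_bd₂_eq_zero (hF : IsPseudomanifold F)
    {A : Finset (Finset α)} {v : α}
    (hA : ∀ f ∈ A, ∀ g ∈ F, ∀ e ∈ edges F, v ∈ e → e ∈ f.sym2 → e ∈ g.sym2 → g ∈ A)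
    (z : F → ZMod 2) :
    (fun e : edges F => if v ∈ (e : Sym2 α) ∧ ∃ f ∈ A, (e : Sym2 α) ∈ f.sym2 then 1 else 0) ⬝ᵥ
      bd₂ F z = 0 := by
  rw [bd₂, Matrix.mulVecLin_apply, Matrix.dotProduct_mulVec]
  refine (congrArg (· ⬝ᵥ z) ?_).trans (zero_dotProduct z)
  ext ⟨f, hf⟩
  simp only [Matrix.vecMul, dotProduct, Matrix.of_apply, ite_mul, one_mul, zero_mul, ← ite_and,
    Pi.zero_apply]
  rw [sum_coe_sort (edges F) fun e =>
    if (v ∈ e ∧ ∃ f ∈ A, e ∈ f.sym2) ∧ e ∈ f.sym2 then (1 : ZMod 2) else 0, sum_boole]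
  by_cases hfA : f ∈ A
  · have : {e ∈ edges F | (v ∈ e ∧ ∃ f ∈ A, e ∈ f.sym2) ∧ e ∈ f.sym2} =
        {e ∈ edges F | v ∈ e ∧ e ∈ f.sym2} := filter_congr fun e _ =>
      ⟨fun ⟨⟨hve, _⟩, hef⟩ => ⟨hve, hef⟩, fun ⟨hve, hef⟩ => ⟨⟨hve, f, hfA, hef⟩, hef⟩⟩
    rw [this, hF.card_filter_edges hf]
    split_ifs <;> decide
  · rw [filter_false_of_mem fun e he ⟨⟨hve, g, hg, heg⟩, hef⟩ =>
      hfA (hA g hg f hf e he hve heg hef), card_empty, Nat.cast_zero]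

lemma IsPseudomanifold.eq_of_faceReach (hF : IsPseudomanifold F) {P : Sym2 α → Prop}
    {z : F → ZMod 2} (hz : ∀ e (he : e ∈ edges F), P e → bd₂ F z ⟨e, he⟩ = 0)
    {f g : Finset α} (h : FaceReach F P f g) (hf : f ∈ F) (hg : g ∈ F) :
    z ⟨f, hf⟩ = z ⟨g, hg⟩ := by
  induction h with
  | refl => rfl
  | @tail m q _ hmq ih =>
    obtain ⟨hm, -, e, he, hP, hem, heq⟩ := hmq
    rw [ih hm]
    rcases eq_or_ne m q with rfl | hmq
    · rfl
    · rw [← CharTwo.add_eq_zero, ← hF.bd₂_apply_of_ne z he hm hg hmq hem heq, hz e he hP]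

lemma IsPseudomanifold.bd₂_eq_zero_of_forall_eq (hF : IsPseudomanifold F) {z : F → ZMod 2}
    (hz : ∀ f g, z f = z g) : bd₂ F z = 0 := by
  ext ⟨e, he⟩
  obtain ⟨-, f, hf, hef⟩ := mem_edges.1 he
  obtain ⟨g, hg, hgf, heg⟩ := hF.exists_ne_mem_sym2 he f
  rw [hF.bd₂_apply_of_ne z he hf hg hgf.symm hef heg, hz ⟨g, hg⟩ ⟨f, hf⟩,
    CharTwo.add_self_eq_zero, Pi.zero_apply]

open Module Submodule LinearMap

lemma IsPseudomanifold.finrank_ker_bd₂_le (hF : IsPseudomanifold F) (hconn : IsDualConnected F) :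
    finrank (ZMod 2) (ker (bd₂ F)) ≤ 1 := by
  have hker : ker (bd₂ F) ≤ (ZMod 2) ∙ (1 : F → ZMod 2) := by
    intro z hz
    rw [mem_span_singleton]
    rcases F.eq_empty_or_nonempty with rfl | ⟨f₀, hf₀⟩
    · exact ⟨0, Subsingleton.elim _ _⟩
    refine ⟨z ⟨f₀, hf₀⟩, funext fun f => ?_⟩
    simpa using hF.eq_of_faceReach (fun e he _ => congrFun (mem_ker.1 hz) ⟨e, he⟩)
      (hconn _ hf₀ _ f.2) hf₀ f.2
  calc finrank (ZMod 2) (ker (bd₂ F)) ≤ finrank (ZMod 2) ((ZMod 2) ∙ (1 : F → ZMod 2)) :=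
        finrank_mono hker
    _ ≤ 1 := by simpa using finrank_span_le_card ({1} : Set (F → ZMod 2))

lemma IsPseudomanifold.card_le_finrank_range_bd₂ (hF : IsPseudomanifold F)
    (hconn : IsDualConnected F) : #F ≤ finrank (ZMod 2) (range (bd₂ F)) + 1 := by
  have := finrank_range_add_finrank_ker (bd₂ F)
  rw [finrank_fintype_fun_eq_card, Fintype.card_coe] at this
  have := hF.finrank_ker_bd₂_le hconn
  omega

lemma single_add_single_mem_range_bd₁_of_mem {f : Finset α} (hf : f ∈ F) {a b : α} (ha : a ∈ f)
    (hb : b ∈ f) : Pi.single a 1 + Pi.single b 1 ∈ range (bd₁ F) := by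
  rcases eq_or_ne a b with rfl | hab
  · rw [show (Pi.single a 1 + Pi.single a 1 : α → ZMod 2) = 0 by
      ext; simp [CharTwo.add_self_eq_zero]]
    exact zero_mem _
  · exact ⟨_, bd₁_single hab (mk_mem_edges hf ha hb hab)⟩

lemma single_add_single_mem_range_bd₁ {P : Sym2 α → Prop} {f g : Finset α}
    (h : FaceReach F P f g) (hf : f ∈ F) {a b : α} (ha : a ∈ f) (hb : b ∈ g) :
    Pi.single a 1 + Pi.single b 1 ∈ range (bd₁ F) := by
  induction h generalizing b with
  | refl => exact single_add_single_mem_range_bd₁_of_mem hf ha hb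
  | @tail m q _ hmq ih =>
    obtain ⟨-, hq, e, -, -, hem, heq⟩ := hmq
    obtain ⟨x, hx⟩ : ∃ x, x ∈ e := ⟨_, Sym2.out_fst_mem e⟩
    have hsum := add_mem (ih (mem_sym2_iff.1 hem x hx))
      (single_add_single_mem_range_bd₁_of_mem hq (mem_sym2_iff.1 heq x hx) hb)
    convert hsum using 1
    ext
    simp only [Pi.add_apply]
    rw [add_assoc, CharTwo.add_cancel_left]

lemma card_verts_le_finrank_range_bd₁ (hconn : IsDualConnected F) :
    #(verts F) ≤ finrank (ZMod 2) (range (bd₁ F)) + 1 := by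
  rcases (verts F).eq_empty_or_nonempty with h | ⟨a₀, ha₀⟩
  · simp [h]
  set W := span (ZMod 2) (Set.range fun a : verts F => (Pi.single (a : α) 1 : α → ZMod 2))
  have hW : finrank (ZMod 2) W = #(verts F) :=
    (finrank_span_eq_card ((Pi.linearIndependent_single_one α (ZMod 2)).comp _
      Subtype.val_injective)).trans (Fintype.card_coe _)
  have hle : W ≤ range (bd₁ F) ⊔ (ZMod 2) ∙ Pi.single a₀ 1 := by
    rw [span_le]
    rintro _ ⟨⟨a, ha⟩, rfl⟩
    dsimp only
    obtain ⟨f, hf, haf⟩ := mem_verts.1 ha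
    obtain ⟨g, hg, hag⟩ := mem_verts.1 ha₀
    have hsum := single_add_single_mem_range_bd₁ (hconn f hf g hg) hf haf hag
    rw [show (Pi.single a 1 : α → ZMod 2) = (Pi.single a 1 + Pi.single a₀ 1) + Pi.single a₀ 1 by
      ext; simp only [Pi.add_apply]; rw [add_assoc, CharTwo.add_self_eq_zero, add_zero]]
    exact add_mem (mem_sup_left hsum) (mem_sup_right (mem_span_singleton_self _))
  calc #(verts F) = finrank (ZMod 2) W := hW.symm
    _ ≤ finrank (ZMod 2) ↥(range (bd₁ F) ⊔ (ZMod 2) ∙ Pi.single a₀ 1) := finrank_mono hle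
    _ ≤ finrank (ZMod 2) (range (bd₁ F)) + finrank (ZMod 2) ((ZMod 2) ∙ Pi.single a₀ 1) :=
        finrank_add_le_finrank_add_finrank _ _
    _ ≤ _ := by
        gcongr
        simpa using finrank_span_le_card ({Pi.single a₀ 1} : Set (α → ZMod 2))

lemma finrank_ker_bd₁_add_card_verts_le (hconn : IsDualConnected F) :
    finrank (ZMod 2) (ker (bd₁ F)) + #(verts F) ≤ #(edges F) + 1 := by
  have := finrank_range_add_finrank_ker (bd₁ F)
  rw [finrank_fintype_fun_eq_card, Fintype.card_coe] at this
  have := card_verts_le_finrank_range_bd₁ hconn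
  omega

theorem IsPseudomanifold.card_verts_add_card_le (hF : IsPseudomanifold F)
    (hconn : IsDualConnected F) : #(verts F) + #F ≤ #(edges F) + 2 := by
  have := finrank_mono (range_le_ker_iff.2 hF.bd₁_comp_bd₂)
  have := hF.card_le_finrank_range_bd₂ hconn
  have := finrank_ker_bd₁_add_card_verts_le hconn
  omega

theorem IsPseudomanifold.range_bd₂_eq_ker_bd₁ (hF : IsPseudomanifold F)
    (hconn : IsDualConnected F) (h : #(verts F) + #F = #(edges F) + 2) :
    range (bd₂ F) = ker (bd₁ F) := by
  refine eq_of_le_of_finrank_le (range_le_ker_iff.2 hF.bd₁_comp_bd₂) ?_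
  have := hF.card_le_finrank_range_bd₂ hconn
  have := finrank_ker_bd₁_add_card_verts_le hconn
  omega

/-! ### Classes of faces connected through edges -/

open scoped Classical in
noncomputable def faceClass (F : Finset (Finset α)) (f : Finset α) : Finset (Finset α) :=
  {g ∈ F | FaceReach F (fun _ => True) f g}

noncomputable def classes (F : Finset (Finset α)) : Finset (Finset (Finset α)) :=
  F.image (faceClass F)

noncomputable def classCount (F : Finset (Finset α)) (v : α) : ℕ :=
  #{c ∈ classes F | v ∈ verts c}

variable {f g h : Finset α}

lemma mem_faceClass : g ∈ faceClass F f ↔ g ∈ F ∧ FaceReach F (fun _ => True) f g := by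
  classical
  exact mem_filter

lemma mem_faceClass_self (hf : f ∈ F) : f ∈ faceClass F f :=
  mem_faceClass.2 ⟨hf, .refl⟩

lemma faceClass_subset : faceClass F f ⊆ F :=
  fun _ hg => (mem_faceClass.1 hg).1

lemma faceClass_eq_of_mem (hg : g ∈ faceClass F f) : faceClass F g = faceClass F f := by
  have hfg := (mem_faceClass.1 hg).2
  ext h
  simp only [mem_faceClass]
  exact and_congr_right fun _ => ⟨hfg.trans, hfg.symm.trans⟩

lemma mem_faceClass_of_mem_sym2 (hg : g ∈ faceClass F f) (hh : h ∈ F) {e : Sym2 α}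
    (he : e ∈ edges F) (heg : e ∈ g.sym2) (heh : e ∈ h.sym2) : h ∈ faceClass F f := by
  obtain ⟨hgF, hfg⟩ := mem_faceClass.1 hg
  exact mem_faceClass.2 ⟨hh, hfg.tail ⟨hgF, hh, e, he, trivial, heg, heh⟩⟩

lemma edges_faceClass_subset : edges (faceClass F f) ⊆ edges F := by
  intro e he
  obtain ⟨hd, g, hg, heg⟩ := mem_edges.1 he
  exact mem_edges.2 ⟨hd, g, faceClass_subset hg, heg⟩

lemma IsPseudomanifold.faceClass (hF : IsPseudomanifold F) (f : Finset α) :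
    IsPseudomanifold (faceClass F f) where
  card_eq_three g hg := hF.card_eq_three g (faceClass_subset hg)
  card_faces_of_edge e he := by
    obtain ⟨-, g, hg, heg⟩ := mem_edges.1 he
    have heF := edges_faceClass_subset he
    rw [← hF.card_faces_of_edge e heF]
    congr 1
    ext h
    simp only [mem_filter]
    exact ⟨fun ⟨hh, heh⟩ => ⟨faceClass_subset hh, heh⟩,
      fun ⟨hh, heh⟩ => ⟨mem_faceClass_of_mem_sym2 hg hh heF heg heh, heh⟩⟩

lemma faceReach_faceClass (hfg : FaceReach F (fun _ => True) f g) :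
    FaceReach (faceClass F f) (fun _ => True) f g := by
  induction hfg with
  | refl => exact .refl
  | @tail m q hfm hmq ih =>
    obtain ⟨hm, hq, e, he, -, hem, heq⟩ := hmq
    have hmc : m ∈ faceClass F f := mem_faceClass.2 ⟨hm, hfm⟩
    exact ih.tail ⟨hmc, mem_faceClass_of_mem_sym2 hmc hq he hem heq, e,
      mem_edges.2 ⟨(mem_edges.1 he).1, m, hmc, hem⟩, trivial, hem, heq⟩

lemma isDualConnected_faceClass (f : Finset α) : IsDualConnected (faceClass F f) := by
  intro g hg h hh
  have hgh := (mem_faceClass.1 hg).2.symm.trans (mem_faceClass.1 hh).2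
  simpa [faceClass_eq_of_mem hg] using faceReach_faceClass hgh

lemma mem_classes {c : Finset (Finset α)} : c ∈ classes F ↔ ∃ f ∈ F, faceClass F f = c :=
  mem_image

lemma filter_classes_mem (hf : f ∈ F) : {c ∈ classes F | f ∈ c} = {faceClass F f} := by
  ext c
  simp only [mem_filter, mem_classes, mem_singleton]
  constructor
  · rintro ⟨⟨g, -, rfl⟩, hfg⟩
    exact (faceClass_eq_of_mem hfg).symm
  · rintro rfl
    exact ⟨⟨f, hf, rfl⟩, mem_faceClass_self hf⟩

lemma filter_classes_edges {e : Sym2 α} (he : e ∈ edges F) (hf : f ∈ F) (hef : e ∈ f.sym2) :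
    {c ∈ classes F | e ∈ edges c} = {faceClass F f} := by
  ext c
  simp only [mem_filter, mem_classes, mem_singleton]
  constructor
  · rintro ⟨⟨g, -, rfl⟩, hec⟩
    obtain ⟨-, h, hh, heh⟩ := mem_edges.1 hec
    exact (faceClass_eq_of_mem (mem_faceClass_of_mem_sym2 hh hf he heh hef)).symm
  · rintro rfl
    exact ⟨⟨f, hf, rfl⟩, mem_edges.2 ⟨(mem_edges.1 he).1, f, mem_faceClass_self hf, hef⟩⟩

theorem IsPseudomanifold.sum_classCount_add_card_le [Fintype α] (hF : IsPseudomanifold F) :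
    ∑ v, classCount F v + #F ≤ #(edges F) + 2 * #(classes F) := by
  have hV : ∑ v, classCount F v = ∑ c ∈ classes F, #(verts c) := by
    have := sum_card_bipartiteAbove_eq_sum_card_bipartiteBelow (fun v c => v ∈ verts c)
      (s := univ) (t := classes F)
    simpa [bipartiteAbove, bipartiteBelow, classCount] using this
  have hF' : ∑ c ∈ classes F, #c = #F := by
    rw [← sum_card_filter_eq_card (fun f c => f ∈ c) fun f hf => by
      rw [filter_classes_mem hf, card_singleton]]
    refine sum_congr rfl fun c hc => ?_
    obtain ⟨f, -, rfl⟩ := mem_classes.1 hc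
    rw [filter_mem_eq_inter, inter_eq_right.2 faceClass_subset]
  have hE : ∑ c ∈ classes F, #(edges c) = #(edges F) := by
    rw [← sum_card_filter_eq_card (fun e c => e ∈ edges c) fun e he => by
      obtain ⟨-, f, hf, hef⟩ := mem_edges.1 he
      rw [filter_classes_edges he hf hef, card_singleton]]
    refine sum_congr rfl fun c hc => ?_
    obtain ⟨f, -, rfl⟩ := mem_classes.1 hc
    rw [filter_mem_eq_inter, inter_eq_right.2 edges_faceClass_subset]
  calc ∑ v, classCount F v + #F = ∑ c ∈ classes F, (#(verts c) + #c) := by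
        rw [sum_add_distrib, hV, hF']
    _ ≤ ∑ c ∈ classes F, (#(edges c) + 2) := sum_le_sum fun c hc => by
        obtain ⟨f, -, rfl⟩ := mem_classes.1 hc
        exact (hF.faceClass f).card_verts_add_card_le (isDualConnected_faceClass f)
    _ = #(edges F) + 2 * #(classes F) := by
        rw [sum_add_distrib, hE, sum_const, smul_eq_mul, mul_comm]

lemma IsPseudomanifold.four_le_card_verts (hF : IsPseudomanifold F) (hf : f ∈ F) :
    4 ≤ #(verts F) := by
  obtain ⟨a, ha, b, hb, hab⟩ := one_lt_card.1 (by rw [hF.card_eq_three f hf]; norm_num)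
  obtain ⟨g, hg, hgf, -⟩ := hF.exists_ne_mem_sym2 (mk_mem_edges hf ha hb hab) f
  have hunion : f ∪ g ⊆ verts F :=
    union_subset (fun x hx => mem_verts.2 ⟨f, hf, hx⟩) (fun x hx => mem_verts.2 ⟨g, hg, hx⟩)
  have hinter : #(f ∩ g) < #f := card_lt_card ⟨inter_subset_left, fun hsub =>
    hgf (eq_of_subset_of_card_le (hsub.trans inter_subset_right)
      (by rw [hF.card_eq_three f hf, hF.card_eq_three g hg])).symm⟩
  have := card_union_add_card_inter f g
  have := card_le_card hunion
  rw [hF.card_eq_three f hf, hF.card_eq_three g hg] at *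
  omega

lemma one_le_classCount {v : α} (hf : f ∈ F) (hv : v ∈ f) : 1 ≤ classCount F v :=
  card_pos.2 ⟨faceClass F f, mem_filter.2 ⟨mem_image_of_mem _ hf,
    mem_verts.2 ⟨f, mem_faceClass_self hf, hv⟩⟩⟩

lemma two_le_classCount {v : α} {c c' : Finset (Finset α)} (hc : c ∈ classes F)
    (hc' : c' ∈ classes F) (hcc' : c ≠ c') (hv : v ∈ verts c) (hv' : v ∈ verts c') :
    2 ≤ classCount F v := by
  rw [← card_pair hcc']
  exact card_le_card (by simp [insert_subset_iff, hc, hc', hv, hv'])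

lemma IsPseudomanifold.four_le_card_verts_of_mem_classes (hF : IsPseudomanifold F)
    {c : Finset (Finset α)} (hc : c ∈ classes F) : 4 ≤ #(verts c) := by
  obtain ⟨f, hf, rfl⟩ := mem_classes.1 hc
  exact (hF.faceClass f).four_le_card_verts (mem_faceClass_self hf)

lemma one_lt_card_classes (hconn : ¬ IsDualConnected F) : 1 < #(classes F) := by
  simp only [IsDualConnected, not_forall] at hconn
  obtain ⟨f, hf, g, hg, hfg⟩ := hconn
  refine one_lt_card.2 ⟨_, mem_image_of_mem _ hf, _, mem_image_of_mem _ hg, fun h => hfg ?_⟩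
  exact (mem_faceClass.1 (h ▸ mem_faceClass_self hg)).2

end Faces

namespace PlaneTriangulation

open Faces Module Submodule LinearMap

variable {V : Type*} [Fintype V] [DecidableEq V] (T : PlaneTriangulation V)

lemma exists_face_of_adj {a b : V} (h : T.G.Adj a b) : ∃ f ∈ T.faces, a ∈ f ∧ b ∈ f := by
  obtain ⟨f, hf⟩ := card_pos.1 (by rw [T.edge_two_faces a b h]; norm_num)
  exact ⟨f, (mem_filter.1 hf).1, (mem_filter.1 hf).2⟩

lemma mk_mem_edges_iff {a b : V} : s(a, b) ∈ edges T.faces ↔ T.G.Adj a b := by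
  constructor
  · intro h
    obtain ⟨hd, f, hf, hab⟩ := mem_edges.1 h
    rw [mk_mem_sym2_iff] at hab
    exact T.face_clique f hf a hab.1 b hab.2 (by simpa using hd)
  · intro h
    obtain ⟨f, hf, ha, hb⟩ := T.exists_face_of_adj h
    exact mk_mem_edges hf ha hb h.ne

lemma coe_edges : (edges T.faces : Set (Sym2 V)) = T.G.edgeSet := by
  ext e
  induction e using Sym2.ind with
  | h a b => simp [mk_mem_edges_iff]

lemma isPseudomanifold : IsPseudomanifold T.faces where
  card_eq_three := T.face_card
  card_faces_of_edge e he := by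
    induction e using Sym2.ind with
    | h a b =>
      rw [← T.edge_two_faces a b (T.mk_mem_edges_iff.1 he)]
      simp only [mk_mem_sym2_iff]

lemma exists_adj (h4 : FourConnected T.G) (v : V) : ∃ u, T.G.Adj v u := by
  obtain ⟨w, hw⟩ := Fintype.exists_ne_of_one_lt_card (by have := h4.1; omega) v
  by_contra! hno
  exact hw ((h4.preconnected_induce_compl ∅ (by simp)).induce_propagate (P := (· = v))
    (fun p q _ _ hpq hp => absurd (hp ▸ hpq) (hno q)) (by simp) (by simp) rfl)

lemma verts_faces (h4 : FourConnected T.G) : verts T.faces = univ := by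
  refine eq_univ_of_forall fun v => ?_
  obtain ⟨u, hu⟩ := T.exists_adj h4 v
  obtain ⟨f, hf, hv, -⟩ := T.exists_face_of_adj hu
  exact mem_verts.2 ⟨f, hf, hv⟩

lemma card_verts_add_card_faces (h4 : FourConnected T.G) :
    #(verts T.faces) + #T.faces = #(edges T.faces) + 2 := by
  have := T.euler
  rw [← T.coe_edges, Set.ncard_coe_finset] at this
  rw [T.verts_faces h4, card_univ]
  omega

/-- The vertices a class shares with other classes separate it from them. -/
lemma four_le_card_shared (h4 : FourConnected T.G) (hC : 1 < #(classes T.faces))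
    {c : Finset (Finset V)} (hc : c ∈ classes T.faces) :
    4 ≤ #{v ∈ verts c | 2 ≤ classCount T.faces v} := by
  have hF := T.isPseudomanifold
  set S := {v ∈ verts c | 2 ≤ classCount T.faces v}
  by_contra! hS
  obtain ⟨x, hx, hxS⟩ := exists_mem_notMem_of_card_lt_card
    (hS.trans_le (hF.four_le_card_verts_of_mem_classes hc))
  obtain ⟨c', hc', hcc'⟩ := exists_mem_ne hC c
  obtain ⟨y, hy, hyc⟩ : ∃ y ∈ verts c', y ∉ verts c := by
    by_contra! hsub
    have : verts c' ⊆ S := fun y hy =>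
      mem_filter.2 ⟨hsub y hy, two_le_classCount hc hc' hcc'.symm (hsub y hy) hy⟩
    have := card_le_card this
    have := hF.four_le_card_verts_of_mem_classes hc'
    omega
  refine hyc ((h4.preconnected_induce_compl S (by omega)).induce_propagate
    (P := (· ∈ verts c)) ?_ hxS (fun h => hyc (mem_filter.1 h).1) hx)
  intro p q hpS _ hpq hp
  obtain ⟨h, hh, hph, hqh⟩ := T.exists_face_of_adj hpq
  by_contra hq
  have hne : faceClass T.faces h ≠ c := fun heq =>
    hq (heq ▸ mem_verts.2 ⟨h, mem_faceClass_self hh, hqh⟩)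
  exact hpS (mem_filter.2 ⟨hp, two_le_classCount hc (mem_image_of_mem _ hh) hne.symm hp
    (mem_verts.2 ⟨h, mem_faceClass_self hh, hph⟩)⟩)

theorem isDualConnected (h4 : FourConnected T.G) : IsDualConnected T.faces := by
  by_contra hconn
  have hC := one_lt_card_classes hconn
  have hr : ∀ v, 1 ≤ classCount T.faces v := fun v => by
    obtain ⟨f, hf, hv⟩ := mem_verts.1 (T.verts_faces h4 ▸ mem_univ v)
    exact one_le_classCount hf hv
  have hshared : ∑ c ∈ classes T.faces, #{v ∈ verts c | 2 ≤ classCount T.faces v} =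
      ∑ v with 2 ≤ classCount T.faces v, classCount T.faces v := by
    have := sum_card_bipartiteAbove_eq_sum_card_bipartiteBelow (fun v c => v ∈ verts c)
      (s := {v | 2 ≤ classCount T.faces v}) (t := classes T.faces)
    simp only [bipartiteAbove, bipartiteBelow, filter_filter] at this
    refine (sum_congr rfl fun c _ => congrArg card (ext fun v => ?_)).trans this.symm
    simp [and_comm]
  have h4C := card_nsmul_le_sum _ _ _ fun c hc => T.four_le_card_shared h4 hC hc
  have := two_mul_card_add_sum_le _ hr
  have := T.isPseudomanifold.sum_classCount_add_card_le
  have := T.card_verts_add_card_faces h4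
  rw [T.verts_faces h4, card_univ] at this
  rw [smul_eq_mul, hshared] at h4C
  omega

theorem range_bd₂_eq_ker_bd₁ (h4 : FourConnected T.G) :
    range (bd₂ T.faces) = ker (bd₁ T.faces) :=
  T.isPseudomanifold.range_bd₂_eq_ker_bd₁ (T.isDualConnected h4) (T.card_verts_add_card_faces h4)

lemma exists_chain_bd₁_eq_avoiding (h4 : FourConnected T.G) {u v w : V} (hu : u ≠ v) (hw : w ≠ v) :
    ∃ p : edges T.faces → ZMod 2, bd₁ T.faces p = Pi.single u 1 + Pi.single w 1 ∧
      ∀ e : edges T.faces, v ∈ (e : Sym2 V) → p e = 0 := by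
  refine (h4.preconnected_induce_compl {v} (by simp)).induce_propagate
    (P := fun q => ∃ p : edges T.faces → ZMod 2, bd₁ T.faces p = Pi.single u 1 + Pi.single q 1 ∧
      ∀ e : edges T.faces, v ∈ (e : Sym2 V) → p e = 0) ?_ (x := u) (by simpa) (by simpa)
    ⟨0, by ext; simp [CharTwo.add_self_eq_zero], fun _ _ => rfl⟩
  rintro q q' hq hq' hqq' ⟨p, hp, hpv⟩
  refine ⟨p + Pi.single ⟨s(q, q'), T.mk_mem_edges_iff.2 hqq'⟩ 1, ?_, fun e hve => ?_⟩
  · rw [map_add, hp, bd₁_single hqq'.ne]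
    ext
    simp only [Pi.add_apply]
    ring_nf
    reduce_mod_char
  · rw [Pi.add_apply, hpv e hve, Pi.single_eq_of_ne, add_zero]
    rintro rfl
    obtain rfl | rfl := Sym2.mem_iff.1 hve <;> simp at hq hq'

theorem faceReach_of_mem (h4 : FourConnected T.G) {v : V} {f g : Finset V} (hf : f ∈ T.faces)
    (hg : g ∈ T.faces) (hvf : v ∈ f) (hvg : v ∈ g) : FaceReach T.faces (v ∈ ·) f g := by
  classical
  by_contra hfg
  set A := {h ∈ T.faces | FaceReach T.faces (v ∈ ·) f h}
  have hA : ∀ h ∈ A, ∀ k ∈ T.faces, ∀ e ∈ edges T.faces, v ∈ e → e ∈ h.sym2 → e ∈ k.sym2 →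
      k ∈ A := fun h hh k hk e he hve heh hek =>
    mem_filter.2 ⟨hk, (mem_filter.1 hh).2.tail ⟨(mem_filter.1 hh).1, hk, e, he, hve, heh, hek⟩⟩
  obtain ⟨u, hu, huv⟩ := exists_mem_ne (by rw [T.face_card f hf]; norm_num) v
  obtain ⟨w, hw, hwv⟩ := exists_mem_ne (by rw [T.face_card g hg]; norm_num) v
  have hvu := mk_mem_edges hf hvf hu huv.symm
  have hvw := mk_mem_edges hg hvg hw hwv.symm
  have hvuA : ∃ h ∈ A, v ∈ h ∧ u ∈ h := ⟨f, mem_filter.2 ⟨hf, .refl⟩, hvf, hu⟩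
  have hvwA : ¬ ∃ h ∈ A, v ∈ h ∧ w ∈ h := fun ⟨h, hh, hwh⟩ =>
    hfg (mem_filter.1 (hA h hh g hg _ hvw (Sym2.mem_mk_left v w) (mk_mem_sym2_iff.2 hwh)
      (mk_mem_sym2_iff.2 ⟨hvg, hw⟩))).2
  obtain ⟨p, hp, hpv⟩ := T.exists_chain_bd₁_eq_avoiding h4 huv hwv
  -- the cycle `v u ⋯ w v` crosses the boundary of `A` around `v` exactly once
  obtain ⟨z, hz⟩ : p + Pi.single ⟨s(v, u), hvu⟩ 1 + Pi.single ⟨s(v, w), hvw⟩ 1 ∈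
      range (bd₂ T.faces) := by
    rw [T.range_bd₂_eq_ker_bd₁ h4, mem_ker, map_add, map_add, hp, bd₁_single huv.symm,
      bd₁_single hwv.symm]
    ext
    simp only [Pi.add_apply, Pi.zero_apply]
    ring_nf
    reduce_mod_char
  have := T.isPseudomanifold.dotProduct_bd₂_eq_zero hA z
  rw [hz, dotProduct_add, dotProduct_add, dotProduct_single, dotProduct_single, dotProduct,
    sum_eq_zero fun e _ => by rcases em (v ∈ (e : Sym2 V)) with h | h <;> simp [h, hpv]] at this
  simp [hvuA, hvwA] at this

lemma forall_eq_of_eq_at_vertices {β : Type*} (h4 : FourConnected T.G) {S : Finset V}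
    (hS : #S ≤ 3) (hmeet : ∀ f ∈ T.faces, ∃ x ∈ f, x ∉ S) {z : T.faces → β}
    (hloc : ∀ x ∉ S, ∀ f (hf : f ∈ T.faces) g (hg : g ∈ T.faces), x ∈ f → x ∈ g →
      z ⟨f, hf⟩ = z ⟨g, hg⟩) (f g : T.faces) : z f = z g := by
  obtain ⟨f, hf⟩ := f
  obtain ⟨g, hg⟩ := g
  obtain ⟨x, hxf, hxS⟩ := hmeet f hf
  obtain ⟨w, hwg, hwS⟩ := hmeet g hg
  refine (h4.preconnected_induce_compl S hS).induce_propagate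
    (P := fun p => ∀ h (hh : h ∈ T.faces), p ∈ h → z ⟨f, hf⟩ = z ⟨h, hh⟩) ?_ hxS hwS
    (fun h hh hxh => hloc x hxS f hf h hh hxf hxh) g hg hwg
  intro p q _ hqS hpq hp h hh hqh
  obtain ⟨k, hk, hpk, hqk⟩ := T.exists_face_of_adj hpq
  rw [hp k hk hpk, hloc q hqS k hk h hh hqk hqh]

/-- No separating triangles: the triangle bounds a `2`-chain `z`, which is locally constant
around every vertex off the triangle, hence constant, hence has zero boundary. -/
theorem insert_mem_faces (h4 : FourConnected T.G) {a b c : V} (hab : T.G.Adj a b)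
    (hbc : T.G.Adj b c) (hac : T.G.Adj a c) : {a, b, c} ∈ T.faces := by
  by_contra habc
  have hF := T.isPseudomanifold
  set S : Finset V := {a, b, c}
  have hab' := T.mk_mem_edges_iff.2 hab
  have hbc' := T.mk_mem_edges_iff.2 hbc
  have hac' := T.mk_mem_edges_iff.2 hac
  set y : edges T.faces → ZMod 2 :=
    Pi.single ⟨s(a, b), hab'⟩ 1 + Pi.single ⟨s(b, c), hbc'⟩ 1 + Pi.single ⟨s(a, c), hac'⟩ 1
  obtain ⟨z, hz⟩ : y ∈ range (bd₂ T.faces) := by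
    rw [T.range_bd₂_eq_ker_bd₁ h4, mem_ker, map_add, map_add, bd₁_single hab.ne,
      bd₁_single hbc.ne, bd₁_single hac.ne]
    ext
    simp only [Pi.add_apply, Pi.zero_apply]
    ring_nf
    reduce_mod_char
  have hy : ∀ x ∉ S, ∀ e : edges T.faces, x ∈ (e : Sym2 V) → y e = 0 := by
    intro x hx e hxe
    simp only [y, Pi.add_apply]
    rw [Pi.single_eq_of_ne, Pi.single_eq_of_ne, Pi.single_eq_of_ne, add_zero, add_zero] <;>
    · rintro rfl
      obtain rfl | rfl := Sym2.mem_iff.1 hxe <;> simp [S] at hx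
  have hloc : ∀ x ∉ S, ∀ f (hf : f ∈ T.faces) g (hg : g ∈ T.faces), x ∈ f → x ∈ g →
      z ⟨f, hf⟩ = z ⟨g, hg⟩ := fun x hx f hf g hg hxf hxg =>
    hF.eq_of_faceReach (fun e he hxe => hz ▸ hy x hx ⟨e, he⟩ hxe)
      (T.faceReach_of_mem h4 hf hg hxf hxg) hf hg
  have hmeet : ∀ f ∈ T.faces, ∃ x ∈ f, x ∉ S := by
    intro f hf
    by_contra! hsub
    exact habc (eq_of_subset_of_card_le hsub (card_le_three.trans (T.face_card f hf).ge) ▸ hf)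
  have := congrFun (hF.bd₂_eq_zero_of_forall_eq
    (T.forall_eq_of_eq_at_vertices h4 card_le_three hmeet hloc)) ⟨s(a, b), hab'⟩
  rw [hz] at this
  simp [y, hab.ne, hbc.ne, hac.ne] at this

lemma induce_neighborSet_preconnected (h4 : FourConnected T.G) (v : V) :
    (T.G.induce (T.G.neighborSet v)).Preconnected := by
  rintro ⟨x, hx⟩ ⟨y, hy⟩
  have hface : ∀ h ∈ T.faces, ∀ a (ha : T.G.Adj v a) b (hb : T.G.Adj v b), a ∈ h → b ∈ h →
      (T.G.induce (T.G.neighborSet v)).Reachable ⟨a, ha⟩ ⟨b, hb⟩ := by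
    intro h hh a ha b hb hah hbh
    rcases eq_or_ne a b with rfl | hab
    · rfl
    · exact SimpleGraph.Adj.reachable (T.face_clique h hh a hah b hbh hab)
  obtain ⟨f, hf, hvf, hxf⟩ := T.exists_face_of_adj hx
  obtain ⟨g, hg, hvg, hyg⟩ := T.exists_face_of_adj hy
  suffices ∀ h, FaceReach T.faces (v ∈ ·) f h → ∀ b (hb : T.G.Adj v b), b ∈ h →
      (T.G.induce (T.G.neighborSet v)).Reachable ⟨x, hx⟩ ⟨b, hb⟩ from
    this g (T.faceReach_of_mem h4 hf hg hvf hvg) y hy hyg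
  intro h hfh
  induction hfh with
  | refl => exact fun b hb hbf => hface f hf x hx b hb hxf hbf
  | @tail m q _ hmq ih =>
    obtain ⟨-, hq, e, he, hve, hem, heq⟩ := hmq
    obtain ⟨u, rfl⟩ := Sym2.mem_iff_exists.1 hve
    have hvu := T.mk_mem_edges_iff.1 he
    exact fun b hb hbq => (ih u hvu (mk_mem_sym2_iff.1 hem).2).trans
      (hface q hq u hvu b hb (mk_mem_sym2_iff.1 heq).2 hbq)

lemma exists_eq_insert_of_mem_faces {f : Finset V} (hf : f ∈ T.faces) {u v : V} (huv : u ≠ v)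
    (hu : u ∈ f) (hv : v ∈ f) : ∃ w, w ≠ u ∧ w ≠ v ∧ f = {u, v, w} := by
  have hsub : {u, v} ⊆ f := by simp [insert_subset_iff, hu, hv]
  obtain ⟨w, hw⟩ := card_eq_one.1 (by
    rw [card_sdiff_of_subset hsub, T.face_card f hf, card_pair huv] : #(f \ {u, v}) = 1)
  have hwf : w ∈ f \ {u, v} := hw ▸ mem_singleton_self w
  refine ⟨w, fun h => by simp [h] at hwf, fun h => by simp [h] at hwf, ?_⟩
  rw [← union_sdiff_of_subset hsub, hw]
  ext
  simp

lemma ncard_neighborSet_induce_neighborSet (h4 : FourConnected T.G) {v : V}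
    (u : T.G.neighborSet v) : ((T.G.induce (T.G.neighborSet v)).neighborSet u).ncard = 2 := by
  have hvu : T.G.Adj v u := u.2
  rw [← T.edge_two_faces v u hvu, ← Set.ncard_coe_finset]
  refine Set.ncard_congr (fun w _ => {v, (u : V), (w : V)}) (fun w hw => ?_)
    (fun w w' hw _ h => ?_) (fun h hh => ?_)
  · simp only [coe_filter, Set.mem_ofPred_eq, mem_insert, true_or, or_true, and_true]
    exact T.insert_mem_faces h4 hvu hw w.2
  · have : (w : V) ∈ ({v, (u : V), (w' : V)} : Finset V) := by
      rw [← h]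
      simp
    simp only [mem_insert, mem_singleton] at this
    rcases this with h' | h' | h'
    · exact absurd h' (w.2 : T.G.Adj v w).ne'
    · exact absurd h' (hw : T.G.Adj u w).ne'
    · exact Subtype.ext h'
  · obtain ⟨hh, hvh, huh⟩ := mem_filter.1 hh
    obtain ⟨w, hwv, hwu, rfl⟩ := T.exists_eq_insert_of_mem_faces hh hvu.ne hvh huh
    exact ⟨⟨w, T.face_clique _ hh v (by simp) w (by simp) hwv.symm⟩,
      T.face_clique _ hh u (by simp) w (by simp) hwu.symm, rfl⟩

end PlaneTriangulation

/-- In a 4-connected plane triangulation, the neighbourhood of every vertex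
induces a cycle. -/
theorem stmt3 {V : Type*} [Fintype V] [DecidableEq V] (T : PlaneTriangulation V)
    (h4 : FourConnected T.G) (v : V) :
    IsCycleGraph (T.G.induce (T.G.neighborSet v)) := by
  obtain ⟨u, hu⟩ := T.exists_adj h4 v
  have hconn := T.induce_neighborSet_preconnected h4 v
  exact ⟨⟨⟨u, hu⟩⟩, (SimpleGraph.connected_iff _).2 ⟨hconn, ⟨⟨u, hu⟩⟩⟩,
    T.ncard_neighborSet_induce_neighborSet h4⟩
end

section
/- If G belongs to E(4) with colour classes B, W, R, then |B ∪ W| > |G|/2, i.e., the number of black and white vertices together exceeds half the total number of vertices. -/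
/-! Every face is a triangle, so it meets each colour class in at most one vertex and hence
contains exactly one red vertex. Counting face–vertex incidences at the red vertices gives
`F = 4|R|`; with `3F = 2E` and Euler's formula this yields `|G| = 2|R| + 2`, so
`|B ∪ W| = |G| - |R| = |R| + 2 > |G| / 2`. -/

open Finset

namespace PlaneTriangulation

variable {V : Type*} [Fintype V] [DecidableEq V] (T : PlaneTriangulation V)

theorem deg_eq_degree [DecidableRel T.G.Adj] (v : V) : T.deg v = T.G.degree v := by
  rw [deg, ← Nat.card_coe_set_eq, Nat.card_eq_fintype_card,
    SimpleGraph.card_neighborSet_eq_degree]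

-- Double count pairs (face `f ∋ v`, neighbour `u ∈ f` of `v`): two per face, two per edge `vu`.
theorem card_faces_mem (v : V) : #{f ∈ T.faces | v ∈ f} = T.deg v := by
  classical
  have hface : ∀ f ∈ {f ∈ T.faces | v ∈ f},
      #((T.G.neighborFinset v).bipartiteAbove (fun f u ↦ u ∈ f) f) = 2 := by
    intro f hf
    rw [mem_filter] at hf
    have : (T.G.neighborFinset v).bipartiteAbove (fun f u ↦ u ∈ f) f = f.erase v := by
      ext u
      simp only [bipartiteAbove, mem_filter, SimpleGraph.mem_neighborFinset, mem_erase]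
      exact ⟨fun h ↦ ⟨(T.G.ne_of_adj h.1).symm, h.2⟩,
        fun h ↦ ⟨T.face_clique f hf.1 v hf.2 u h.2 (Ne.symm h.1), h.2⟩⟩
    rw [this, card_erase_of_mem hf.2, T.face_card f hf.1]
  have hedge : ∀ u ∈ T.G.neighborFinset v,
      #({f ∈ T.faces | v ∈ f}.bipartiteBelow (fun f u ↦ u ∈ f) u) = 2 := by
    intro u hu
    rw [bipartiteBelow, filter_filter]
    exact T.edge_two_faces v u ((T.G.mem_neighborFinset v u).mp hu)
  have := card_mul_eq_card_mul _ hface hedge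
  rw [T.deg_eq_degree, ← SimpleGraph.card_neighborFinset_eq_degree]
  omega

theorem sum_card_faces : ∑ f ∈ T.faces, #f = 2 * T.G.edgeSet.ncard := by
  classical
  calc ∑ f ∈ T.faces, #f
      = ∑ f ∈ T.faces, #((univ : Finset V).bipartiteAbove (fun f v ↦ v ∈ f) f) := by
        simp [bipartiteAbove]
    _ = ∑ v, #{f ∈ T.faces | v ∈ f} := sum_card_bipartiteAbove_eq_sum_card_bipartiteBelow _
    _ = ∑ v, T.G.degree v := by simp only [card_faces_mem, deg_eq_degree]
    _ = 2 * T.G.edgeSet.ncard := by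
        rw [SimpleGraph.sum_degrees_eq_twice_card_edges, Set.ncard_eq_toFinset_card']
        rfl

theorem three_mul_card_faces : 3 * #T.faces = 2 * T.G.edgeSet.ncard := by
  rw [← T.sum_card_faces, mul_comm, ← smul_eq_mul, ← sum_const]
  exact (sum_congr rfl T.face_card).symm

theorem two_mul_card_eq_card_faces_add_four : 2 * Fintype.card V = #T.faces + 4 := by
  have heuler := T.euler
  have hincidence := T.three_mul_card_faces
  omega

theorem card_faces_eq_ncard_mul {S : Set V} {d : ℕ}
    (hS : ∀ f ∈ T.faces, ((f : Set V) ∩ S).ncard = 1) (hd : ∀ v ∈ S, T.deg v = d) :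
    #T.faces = S.ncard * d := by
  classical
  have hmeet : ∀ f ∈ T.faces, #(S.toFinset.bipartiteAbove (fun f v ↦ v ∈ f) f) = 1 := by
    intro f hf
    rw [← hS f hf, ← Set.ncard_coe_finset, bipartiteAbove, coe_filter, Set.inter_comm]
    simp only [Set.mem_toFinset]
    rfl
  have := card_mul_eq_card_mul _ hmeet
    (fun v hv ↦ by rw [bipartiteBelow, T.card_faces_mem, hd v (Set.mem_toFinset.mp hv)])
  rwa [mul_one, ← Set.ncard_eq_toFinset_card'] at this

theorem ncard_face_inter_le_one {S : Set V} (hS : ∀ a ∈ S, ∀ b ∈ S, ¬ T.G.Adj a b)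
    {f : Finset V} (hf : f ∈ T.faces) : ((f : Set V) ∩ S).ncard ≤ 1 :=
  (Set.ncard_le_one).mpr fun a ⟨haf, haS⟩ b ⟨hbf, hbS⟩ ↦ by
    by_contra hab
    exact hS a haS b hbS (T.face_clique f hf a haf b hbf hab)

namespace IsE4Coloring

variable {T} {B W R : Set V} (h : T.IsE4Coloring B W R)
include h

theorem union_eq_compl : B ∪ W = Rᶜ := by
  obtain ⟨hcover, -, hBR, hWR, -⟩ := h
  ext v
  have hv : v ∈ B ∪ W ∪ R := hcover ▸ Set.mem_univ v
  simp only [Set.mem_union] at hv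
  simp only [Set.mem_union, Set.mem_compl_iff]
  constructor
  · rintro (hB | hW) hR
    exacts [hBR.notMem_of_mem_left hB hR, hWR.notMem_of_mem_left hW hR]
  · tauto

theorem ncard_face_inter_red {f : Finset V} (hf : f ∈ T.faces) :
    ((f : Set V) ∩ R).ncard = 1 := by
  have hdiff : (f : Set V) \ R = ((f : Set V) ∩ B) ∪ ((f : Set V) ∩ W) := by
    rw [Set.sdiff_eq, ← h.union_eq_compl, Set.inter_union_distrib_left]
  have hsplit := Set.ncard_inter_add_ncard_sdiff_eq_ncard (f : Set V) R
  rw [Set.ncard_coe_finset, T.face_card f hf, hdiff] at hsplit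
  have hBW := Set.ncard_union_le ((f : Set V) ∩ B) (f ∩ W)
  have hB := T.ncard_face_inter_le_one h.2.2.2.2.1 hf
  have hW := T.ncard_face_inter_le_one h.2.2.2.2.2.1 hf
  have hR := T.ncard_face_inter_le_one h.2.2.2.2.2.2.1 hf
  omega

end IsE4Coloring

end PlaneTriangulation

/-- If `G ∈ E(4)` with colour classes `B, W, R`, then `|B ∪ W| > |G| / 2`. -/
theorem stmt5 {V : Type*} [Fintype V] [DecidableEq V] (T : PlaneTriangulation V)
    (B W R : Set V) (hE4 : T.IsE4Coloring B W R) :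
    2 * (B ∪ W).ncard > Fintype.card V := by
  have hfaces : #T.faces = R.ncard * 4 :=
    T.card_faces_eq_ncard_mul (fun _ hf ↦ hE4.ncard_face_inter_red hf) hE4.2.2.2.2.2.2.2
  have hsplit : R.ncard + (B ∪ W).ncard = Fintype.card V := by
    rw [hE4.union_eq_compl, Set.ncard_add_ncard_compl, Nat.card_eq_fintype_card]
  have hcard := T.two_mul_card_eq_card_faces_add_four
  omega
end
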